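/- Let ℓ ≥ 2, let q ≥ 2 be a real number, let 1 ≤ m ≤ n ≤ ℓ be integers and let ε ∈ {+1, −1}. Let w : ℝ^ℓ → ℝ^ℓ be the linear map determined by w(e_j) = e_{j+1} for m ≤ j ≤ n−1, w(e_n) = ε·e_m, and w(e_j) = e_j for all other j. Suppose real numbers x_1 > x_2 > ⋯ > x_m > 0 are given, satisfying x_{m−1} > 3x_m in case m ≥ 2. Then there exist real numbers x_{m+1} > x_{m+2} > ⋯ > x_{min(n+1,ℓ)} > 0 with x_m > x_{m+1}, and with x_n > 3x_{n+1} in case n ≤ ℓ−1, such that for every choice of real numbers x_{n+2} > x_{n+3} > ⋯ > x_ℓ > 0 with x_{n+1} > x_{n+2} (this choice being empty when n+1 ≥ ℓ), the vector x = (x_1,…,x_ℓ) satisfies ⟨qx − wx, e_1⟩ > 0, ⟨qx − wx, e_i − e_{i+1}⟩ > 0 for all 1 ≤ i ≤ ℓ−1, and ⟨qx − wx, e_n − e_{n+1}⟩ > 2x_{n+1} in case n ≤ ℓ−1. -/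

import Mathlib

/-!
In coordinates, `(w x)_k` is `x_k` off the cycle `[m, n]`, `ε x_n` at `k = m` and `x_{k-1}` for
`m < k ≤ n`, so the pairing of `q x - w x` with `e_i - e_{i+1}` is `(q - 1)(x_i - x_{i+1}) > 0` away
from the cycle. Along the cycle take `x_j = (3/5)^(j-m) x_m`: the pairing there is
`q (x_i - x_{i+1}) - (x_{i-1} - x_i)`, positive because the ratio `3/5` exceeds `1/q`. Taking
`x_{n+1} = x_n / 10` leaves the margin `2 x_{n+1}` at `e_n - e_{n+1}`, and at `i = m - 1` the gap
`x_{m-1} > 3 x_m` absorbs the term `ε x_n`.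
-/

open scoped RealInnerProductSpace

/-- The standard basis vector `e_j` (1-based) of `ℝ^ℓ`; zero for out-of-range indices. -/
noncomputable def E (ℓ : ℕ) (j : ℕ) : EuclideanSpace ℝ (Fin ℓ) :=
  if h : 1 ≤ j ∧ j ≤ ℓ then EuclideanSpace.single (⟨j - 1, by omega⟩ : Fin ℓ) (1 : ℝ) else 0

/-- The vector `(x_1, …, x_ℓ) ∈ ℝ^ℓ` built from a (1-based) sequence of reals. -/
noncomputable def vec (ℓ : ℕ) (x : ℕ → ℝ) : EuclideanSpace ℝ (Fin ℓ) :=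
  WithLp.toLp 2 (fun i : Fin ℓ => x (i.1 + 1))

lemma E_eq_vec_single (ℓ a : ℕ) : E ℓ a = vec ℓ (Pi.single a 1) := by
  ext i
  by_cases h : 1 ≤ a ∧ a ≤ ℓ
  · simp only [E, dif_pos h, vec, PiLp.single_apply, Pi.single_apply, Fin.ext_iff]
    congr 1
    grind
  · simp only [E, dif_neg h, vec, Pi.single_apply, PiLp.zero_apply]
    grind

lemma inner_vec_E (ℓ : ℕ) (u : ℕ → ℝ) {k : ℕ} (hk : 1 ≤ k) (hkℓ : k ≤ ℓ) :
    ⟪vec ℓ u, E ℓ k⟫ = u k := by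
  rw [E, dif_pos ⟨hk, hkℓ⟩, EuclideanSpace.inner_single_right]
  simp only [vec, one_mul, conj_trivial]
  congr 1
  omega

lemma inner_E_E (ℓ a : ℕ) {k : ℕ} (hk : 1 ≤ k) (hkℓ : k ≤ ℓ) :
    ⟪E ℓ a, E ℓ k⟫ = if k = a then 1 else 0 := by
  rw [E_eq_vec_single, inner_vec_E ℓ _ hk hkℓ, Pi.single_apply]

lemma vec_eq_sum (ℓ : ℕ) (u : ℕ → ℝ) :
    vec ℓ u = ∑ j ∈ Finset.Icc 1 ℓ, u j • E ℓ j := by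
  ext i
  simp only [E_eq_vec_single, WithLp.ofLp_sum, Finset.sum_apply, PiLp.smul_apply, vec,
    Pi.single_apply, smul_eq_mul, mul_ite, mul_one, mul_zero]
  rw [Finset.sum_ite_eq]
  simp only [Finset.mem_Icc]
  grind

lemma inner_map_vec_E_of_map_E {ℓ : ℕ}
    (w : EuclideanSpace ℝ (Fin ℓ) →ₗ[ℝ] EuclideanSpace ℝ (Fin ℓ)) (σ : ℕ → ℕ) (c : ℕ → ℝ)
    (hw : ∀ j, 1 ≤ j → j ≤ ℓ → w (E ℓ j) = c j • E ℓ (σ j)) (z : ℕ → ℝ) {k p : ℕ}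
    (hk : 1 ≤ k) (hkℓ : k ≤ ℓ) (hp : 1 ≤ p) (hpℓ : p ≤ ℓ)
    (hσ : ∀ j, 1 ≤ j → j ≤ ℓ → (σ j = k ↔ j = p)) :
    ⟪w (vec ℓ z), E ℓ k⟫ = c p * z p := by
  have hterm : ∀ j, 1 ≤ j → j ≤ ℓ →
      ⟪w (z j • E ℓ j), E ℓ k⟫ = if j = p then c p * z p else 0 := by
    intro j hj hjℓ
    rw [map_smul, hw j hj hjℓ, real_inner_smul_left, real_inner_smul_left,
      inner_E_E ℓ _ hk hkℓ]
    by_cases h : j = p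
    · rw [if_pos ((hσ j hj hjℓ).mpr h).symm, if_pos h, h, mul_one, mul_comm]
    · rw [if_neg (fun h' => h ((hσ j hj hjℓ).mp h'.symm)), if_neg h, mul_zero, mul_zero]
  rw [vec_eq_sum, map_sum, sum_inner,
    Finset.sum_congr rfl fun j hj => hterm j (Finset.mem_Icc.mp hj).1 (Finset.mem_Icc.mp hj).2,
    Finset.sum_ite_eq', if_pos (Finset.mem_Icc.mpr ⟨hp, hpℓ⟩)]

def cycleApply (m n : ℕ) (ε : ℝ) (z : ℕ → ℝ) (k : ℕ) : ℝ :=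
  if k < m ∨ n < k then z k else if k = m then ε * z n else z (k - 1)

section cycleApply

variable {m n : ℕ} {ε : ℝ} {z : ℕ → ℝ}

lemma cycleApply_of_lt_or_lt {k : ℕ} (hk : k < m ∨ n < k) : cycleApply m n ε z k = z k :=
  if_pos hk

lemma cycleApply_self (hmn : m ≤ n) : cycleApply m n ε z m = ε * z n := by
  rw [cycleApply, if_neg (by omega), if_pos rfl]

lemma cycleApply_of_lt_of_le {k : ℕ} (hmk : m < k) (hkn : k ≤ n) :
    cycleApply m n ε z k = z (k - 1) := by
  rw [cycleApply, if_neg (by omega), if_neg (by omega)]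

lemma inner_map_vec_E {ℓ : ℕ} (hm : 1 ≤ m) (hmn : m ≤ n) (hn : n ≤ ℓ)
    {w : EuclideanSpace ℝ (Fin ℓ) →ₗ[ℝ] EuclideanSpace ℝ (Fin ℓ)}
    (hw1 : ∀ j, m ≤ j → j + 1 ≤ n → w (E ℓ j) = E ℓ (j + 1))
    (hw2 : w (E ℓ n) = ε • E ℓ m)
    (hw3 : ∀ j, 1 ≤ j → j ≤ ℓ → (j < m ∨ n < j) → w (E ℓ j) = E ℓ j)
    {k : ℕ} (hk : 1 ≤ k) (hkℓ : k ≤ ℓ) :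
    ⟪w (vec ℓ z), E ℓ k⟫ = cycleApply m n ε z k := by
  set σ : ℕ → ℕ := fun j => if j < m ∨ n < j then j else if j < n then j + 1 else m
  set c : ℕ → ℝ := fun j => if j = n then ε else 1
  set p := if k < m ∨ n < k then k else if k = m then n else k - 1
  have hw : ∀ j, 1 ≤ j → j ≤ ℓ → w (E ℓ j) = c j • E ℓ (σ j) := by
    intro j hj hjℓ
    rcases (show (j < m ∨ n < j) ∨ (m ≤ j ∧ j < n) ∨ j = n by omega) with h | h | rfl
    · simp only [σ, c, if_pos h, if_neg (show j ≠ n by omega), one_smul, hw3 j hj hjℓ h]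
    · simp only [σ, c, if_neg (show ¬(j < m ∨ n < j) by omega), if_pos h.2, if_neg h.2.ne,
        one_smul, hw1 j h.1 h.2]
    · simp only [σ, c, if_neg (show ¬(j < m ∨ j < j) by omega), lt_irrefl, if_false, if_true, hw2]
  have hσ : ∀ j, 1 ≤ j → j ≤ ℓ → (σ j = k ↔ j = p) := by
    intro j _ _
    simp only [σ, p]
    split_ifs <;> omega
  have hp : 1 ≤ p ∧ p ≤ ℓ := by
    simp only [p]
    split_ifs <;> omega
  rw [inner_map_vec_E_of_map_E w σ c hw z hk hkℓ hp.1 hp.2 hσ]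
  simp only [cycleApply, c, p]
  split_ifs <;> first | omega | rw [one_mul] | rfl

variable {q : ℝ}

lemma sub_cycleApply_one_pos (hm : 1 ≤ m) (hmn : m ≤ n) (hq : 1 < q)
    (hεz : |ε * z n| ≤ z m) (hz : 0 < z 1) :
    0 < q * z 1 - cycleApply m n ε z 1 := by
  obtain rfl | hm := hm.eq_or_lt
  · rw [cycleApply_self hmn]
    nlinarith [(abs_le.mp hεz).2]
  · rw [cycleApply_of_lt_or_lt (.inl hm)]
    nlinarith

lemma sub_cycleApply_sub_succ_pos (hmn : m ≤ n) (hq : 2 ≤ q) (hεz : |ε * z n| ≤ z m)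
    (hgap : 2 ≤ m → 3 * z m < z (m - 1))
    (hgeom : ∀ j, m ≤ j → j < n → z (j + 1) = 3 / 5 * z j)
    {i : ℕ} (hi : 1 ≤ i) (hin : i ≠ n) (hdec : z (i + 1) < z i) :
    0 < (q * z i - cycleApply m n ε z i) - (q * z (i + 1) - cycleApply m n ε z (i + 1)) := by
  have hεz' := abs_le.mp hεz
  rcases lt_trichotomy (i + 1) m with h | h | h
  · rw [cycleApply_of_lt_or_lt (.inl (by omega)), cycleApply_of_lt_or_lt (.inl h)]
    nlinarith
  · subst h
    rw [cycleApply_of_lt_or_lt (.inl (by omega)), cycleApply_self hmn]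
    have hgap := hgap (by omega)
    rw [Nat.add_sub_cancel] at hgap
    nlinarith
  rcases (show i = m ∨ m < i ∧ i < n ∨ n < i by omega) with rfl | ⟨hmi, hin⟩ | hni
  · rw [cycleApply_self hmn, cycleApply_of_lt_of_le (by omega) (by omega), Nat.add_sub_cancel]
    nlinarith
  · rw [cycleApply_of_lt_of_le hmi hin.le, cycleApply_of_lt_of_le (by omega) hin,
      Nat.succ_sub_one, hgeom i hmi.le hin]
    have hprev := hgeom (i - 1) (by omega) (by omega)
    rw [Nat.sub_add_cancel hi] at hprev
    have hzi : 0 < z i := by linarith [hgeom i hmi.le hin]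
    nlinarith [mul_le_mul_of_nonneg_right hq hzi.le]
  · rw [cycleApply_of_lt_or_lt (.inr hni), cycleApply_of_lt_or_lt (.inr (by omega))]
    nlinarith

lemma sub_cycleApply_sub_succ_gt (hmn : m ≤ n) (hq : 2 ≤ q) (hεz : |ε * z n| ≤ z m)
    (hgeom : ∀ j, m ≤ j → j < n → z (j + 1) = 3 / 5 * z j)
    (htail : z (n + 1) = z n / 10) (hzn : 0 < z n) :
    2 * z (n + 1) <
      (q * z n - cycleApply m n ε z n) - (q * z (n + 1) - cycleApply m n ε z (n + 1)) := by
  rw [cycleApply_of_lt_or_lt (.inr n.lt_succ_self), htail]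
  obtain rfl | hmn := hmn.eq_or_lt
  · rw [cycleApply_self le_rfl]
    nlinarith [(abs_le.mp hεz).2]
  · have := hgeom (n - 1) (by omega) (by omega)
    rw [cycleApply_of_lt_of_le hmn le_rfl]
    rw [Nat.sub_add_cancel (by omega)] at this
    nlinarith

end cycleApply

noncomputable def geometricExtension (m n : ℕ) (x : ℕ → ℝ) (j : ℕ) : ℝ :=
  if j ≤ m then x j else if j ≤ n then x m * (3 / 5) ^ (j - m) else x m * (3 / 5) ^ (n - m) / 10

section geometricExtension

variable {m n : ℕ} {x : ℕ → ℝ}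

lemma geometricExtension_of_le {j : ℕ} (hj : j ≤ m) : geometricExtension m n x j = x j :=
  if_pos hj

lemma geometricExtension_of_le_of_le {j : ℕ} (hmj : m ≤ j) (hjn : j ≤ n) :
    geometricExtension m n x j = x m * (3 / 5) ^ (j - m) := by
  obtain rfl | hmj := hmj.eq_or_lt
  · simp [geometricExtension]
  · rw [geometricExtension, if_neg (by omega), if_pos hjn]

lemma geometricExtension_succ_of_le_of_lt {j : ℕ} (hmj : m ≤ j) (hjn : j < n) :
    geometricExtension m n x (j + 1) = 3 / 5 * geometricExtension m n x j := by
  rw [geometricExtension_of_le_of_le hmj hjn.le, geometricExtension_of_le_of_le (by omega) hjn,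
    Nat.succ_sub hmj, pow_succ]
  ring

lemma geometricExtension_succ_self (hmn : m ≤ n) :
    geometricExtension m n x (n + 1) = geometricExtension m n x n / 10 := by
  rw [geometricExtension_of_le_of_le hmn le_rfl, geometricExtension, if_neg (by omega),
    if_neg (by omega)]

lemma geometricExtension_pos (hxm : 0 < x m) {j : ℕ} (hmj : m ≤ j) :
    0 < geometricExtension m n x j := by
  rw [geometricExtension]
  split_ifs <;> first | rwa [show j = m by omega] | positivity

lemma geometricExtension_succ_lt (hmn : m ≤ n) (hx : ∀ j, 1 ≤ j → j < m → x (j + 1) < x j)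
    (hxm : 0 < x m) {j : ℕ} (hj : 1 ≤ j) (hjn : j ≤ n) :
    geometricExtension m n x (j + 1) < geometricExtension m n x j := by
  rcases (show j < m ∨ m ≤ j ∧ j < n ∨ j = n by omega) with hjm | ⟨hmj, hjn⟩ | hjn
  · rw [geometricExtension_of_le hjm, geometricExtension_of_le (by omega)]
    exact hx j hj hjm
  · rw [geometricExtension_succ_of_le_of_lt hmj hjn]
    linarith [geometricExtension_pos (n := n) hxm hmj]
  · rw [hjn, geometricExtension_succ_self hmn]
    linarith [geometricExtension_pos (n := n) (x := x) hxm hmn]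

end geometricExtension

lemma strictAntiOn_Icc_of_succ_lt {ℓ : ℕ} {z : ℕ → ℝ}
    (hz : ∀ j, 1 ≤ j → j < ℓ → z (j + 1) < z j) : StrictAntiOn z (Set.Icc 1 ℓ) :=
  strictAntiOn_of_succ_lt Set.ordConnected_Icc fun j _ hj hj' => by
    simp only [Order.succ_eq_add_one, Set.mem_Icc] at hj hj' ⊢
    exact hz j hj.1 (by omega)

lemma inner_smul_vec_sub_map_vec_pos {ℓ m n : ℕ} {q ε : ℝ} (hq : 2 ≤ q) (hm : 1 ≤ m)
    (hmn : m ≤ n) (hn : n ≤ ℓ) (hε : |ε| ≤ 1)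
    {w : EuclideanSpace ℝ (Fin ℓ) →ₗ[ℝ] EuclideanSpace ℝ (Fin ℓ)}
    (hw1 : ∀ j, m ≤ j → j + 1 ≤ n → w (E ℓ j) = E ℓ (j + 1))
    (hw2 : w (E ℓ n) = ε • E ℓ m)
    (hw3 : ∀ j, 1 ≤ j → j ≤ ℓ → (j < m ∨ n < j) → w (E ℓ j) = E ℓ j)
    {z : ℕ → ℝ} (hanti : StrictAntiOn z (Set.Icc 1 ℓ)) (hzℓ : 0 < z ℓ)
    (hgap : 2 ≤ m → 3 * z m < z (m - 1))
    (hgeom : ∀ j, m ≤ j → j < n → z (j + 1) = 3 / 5 * z j)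
    (htail : n + 1 ≤ ℓ → z (n + 1) = z n / 10) :
    0 < ⟪q • vec ℓ z - w (vec ℓ z), E ℓ 1⟫ ∧
      (∀ i, 1 ≤ i → i + 1 ≤ ℓ → 0 < ⟪q • vec ℓ z - w (vec ℓ z), E ℓ i - E ℓ (i + 1)⟫) ∧
      (n + 1 ≤ ℓ → 2 * z (n + 1) < ⟪q • vec ℓ z - w (vec ℓ z), E ℓ n - E ℓ (n + 1)⟫) := by
  have hpos : ∀ j, 1 ≤ j → j ≤ ℓ → 0 < z j := fun j hj hjℓ =>
    hzℓ.trans_le (hanti.antitoneOn ⟨hj, hjℓ⟩ ⟨by omega, le_rfl⟩ hjℓ)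
  have hεz : |ε * z n| ≤ z m := by
    rw [abs_mul, abs_of_pos (hpos n (by omega) hn)]
    calc |ε| * z n ≤ z n := mul_le_of_le_one_left (hpos n (by omega) hn).le hε
      _ ≤ z m := hanti.antitoneOn ⟨hm, by omega⟩ ⟨by omega, hn⟩ hmn
  have hcoord : ∀ k, 1 ≤ k → k ≤ ℓ →
      ⟪q • vec ℓ z - w (vec ℓ z), E ℓ k⟫ = q * z k - cycleApply m n ε z k := fun k hk hkℓ => by
    rw [inner_sub_left, real_inner_smul_left, inner_vec_E ℓ z hk hkℓ,
      inner_map_vec_E hm hmn hn hw1 hw2 hw3 hk hkℓ]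
  have hcoord_sub : ∀ i, 1 ≤ i → i + 1 ≤ ℓ → ⟪q • vec ℓ z - w (vec ℓ z), E ℓ i - E ℓ (i + 1)⟫ =
      (q * z i - cycleApply m n ε z i) - (q * z (i + 1) - cycleApply m n ε z (i + 1)) :=
    fun i hi hiℓ => by rw [inner_sub_right, hcoord i hi (by omega), hcoord (i + 1) (by omega) hiℓ]
  have hstrong : n + 1 ≤ ℓ → 2 * z (n + 1) < ⟪q • vec ℓ z - w (vec ℓ z), E ℓ n - E ℓ (n + 1)⟫ :=
    fun h => by
      rw [hcoord_sub n (by omega) h]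
      exact sub_cycleApply_sub_succ_gt hmn hq hεz hgeom (htail h) (hpos n (by omega) hn)
  refine ⟨?_, fun i hi hiℓ => ?_, hstrong⟩
  · rw [hcoord 1 le_rfl (by omega)]
    exact sub_cycleApply_one_pos hm hmn (by linarith) hεz (hpos 1 le_rfl (by omega))
  · obtain rfl | hin := eq_or_ne i n
    · linarith [hstrong hiℓ, hpos (i + 1) (by omega) hiℓ]
    · rw [hcoord_sub i hi hiℓ]
      exact sub_cycleApply_sub_succ_pos hmn hq hεz hgap hgeom hi hin
        (hanti ⟨hi, by omega⟩ ⟨by omega, hiℓ⟩ i.lt_succ_self)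

theorem stmt_7_general (ℓ : ℕ) (q : ℝ) (hq : 2 ≤ q)
    (m n : ℕ) (hm : 1 ≤ m) (hmn : m ≤ n) (hn : n ≤ ℓ)
    (ε : ℝ) (hε : ε = 1 ∨ ε = -1)
    (w : EuclideanSpace ℝ (Fin ℓ) →ₗ[ℝ] EuclideanSpace ℝ (Fin ℓ))
    (hw1 : ∀ j, m ≤ j → j + 1 ≤ n → w (E ℓ j) = E ℓ (j + 1))
    (hw2 : w (E ℓ n) = ε • E ℓ m)
    (hw3 : ∀ j, 1 ≤ j → j ≤ ℓ → (j < m ∨ n < j) → w (E ℓ j) = E ℓ j)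
    (x : ℕ → ℝ)
    (hx : ∀ j, 1 ≤ j → j < m → x (j + 1) < x j) (hxm : 0 < x m)
    (hx3 : 2 ≤ m → 3 * x m < x (m - 1)) :
    ∃ y : ℕ → ℝ,
      (∀ j, j ≤ m → y j = x j) ∧
      (∀ j, m ≤ j → j < min (n + 1) ℓ → y (j + 1) < y j) ∧
      0 < y (min (n + 1) ℓ) ∧
      (n + 1 ≤ ℓ → 3 * y (n + 1) < y n) ∧
      ∀ z : ℕ → ℝ,
        (∀ j, j ≤ min (n + 1) ℓ → z j = y j) →
        (∀ j, n + 1 ≤ j → j < ℓ → z (j + 1) < z j) →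
        0 < z ℓ →
        0 < ⟪q • vec ℓ z - w (vec ℓ z), E ℓ 1⟫ ∧
        (∀ i, 1 ≤ i → i + 1 ≤ ℓ →
          0 < ⟪q • vec ℓ z - w (vec ℓ z), E ℓ i - E ℓ (i + 1)⟫) ∧
        (n + 1 ≤ ℓ →
          2 * z (n + 1) < ⟪q • vec ℓ z - w (vec ℓ z), E ℓ n - E ℓ (n + 1)⟫) := by
  have hydec : ∀ j, 1 ≤ j → j ≤ n →
      geometricExtension m n x (j + 1) < geometricExtension m n x j :=
    fun _ => geometricExtension_succ_lt hmn hx hxm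
  have hypos : ∀ j, m ≤ j → 0 < geometricExtension m n x j := fun _ => geometricExtension_pos hxm
  refine ⟨geometricExtension m n x, fun j => geometricExtension_of_le,
    fun j _ hj => hydec j (by omega) (by omega), hypos _ (by omega),
    fun _ => by linarith [geometricExtension_succ_self (x := x) hmn, hypos n hmn],
    fun z hzy hztail hzℓ => ?_⟩
  refine inner_smul_vec_sub_map_vec_pos hq hm hmn hn (by rcases hε with rfl | rfl <;> simp)
    hw1 hw2 hw3 (strictAntiOn_Icc_of_succ_lt fun j hj hjℓ => ?_) hzℓ (fun h => ?_)
    (fun j hmj hjn => ?_) (fun h => ?_)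
  · by_cases hjn : j ≤ n
    · rw [hzy j (by omega), hzy (j + 1) (by omega)]
      exact hydec j hj hjn
    · exact hztail j (by omega) hjℓ
  · rw [hzy m (by omega), hzy (m - 1) (by omega), geometricExtension_of_le le_rfl,
      geometricExtension_of_le (by omega)]
    exact hx3 h
  · rw [hzy j (by omega), hzy (j + 1) (by omega)]
    exact geometricExtension_succ_of_le_of_lt hmj hjn
  · rw [hzy n (by omega), hzy (n + 1) (by omega)]
    exact geometricExtension_succ_self hmn

/-- Lemma for type `B_ℓ`. For `w = s_m ⋯ s_{n-1}` (case `ε = 1`) or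
`w = s'_{m-1} s_m ⋯ s_{n-1}` (case `ε = -1`) and given `x_1 > ⋯ > x_m > 0` with
`x_{m-1} > 3x_m` if `m ≥ 2`, one can choose `x_{m+1} > ⋯ > x_{min(n+1,ℓ)} > 0` with
`x_n > 3x_{n+1}` if `n ≤ ℓ-1`, such that for every further choice
`x_{n+2} > ⋯ > x_ℓ > 0` with `x_{n+1} > x_{n+2}`, one has `⟨qx - wx, e_1⟩ > 0`,
`⟨qx - wx, e_i - e_{i+1}⟩ > 0` for all `1 ≤ i ≤ ℓ-1`, and
`⟨qx - wx, e_n - e_{n+1}⟩ > 2x_{n+1}` if `n ≤ ℓ-1`. -/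
theorem stmt_7 (ℓ : ℕ) (hℓ : 2 ≤ ℓ) (q : ℝ) (hq : 2 ≤ q)
    (m n : ℕ) (hm : 1 ≤ m) (hmn : m ≤ n) (hn : n ≤ ℓ)
    (ε : ℝ) (hε : ε = 1 ∨ ε = -1)
    (w : EuclideanSpace ℝ (Fin ℓ) →ₗ[ℝ] EuclideanSpace ℝ (Fin ℓ))
    (hw1 : ∀ j, m ≤ j → j + 1 ≤ n → w (E ℓ j) = E ℓ (j + 1))
    (hw2 : w (E ℓ n) = ε • E ℓ m)
    (hw3 : ∀ j, 1 ≤ j → j ≤ ℓ → (j < m ∨ n < j) → w (E ℓ j) = E ℓ j)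
    (x : ℕ → ℝ)
    (hx : ∀ j, 1 ≤ j → j < m → x (j + 1) < x j) (hxm : 0 < x m)
    (hx3 : 2 ≤ m → 3 * x m < x (m - 1)) :
    ∃ y : ℕ → ℝ,
      (∀ j, j ≤ m → y j = x j) ∧
      (∀ j, m ≤ j → j < min (n + 1) ℓ → y (j + 1) < y j) ∧
      0 < y (min (n + 1) ℓ) ∧
      (n + 1 ≤ ℓ → 3 * y (n + 1) < y n) ∧
      ∀ z : ℕ → ℝ,
        (∀ j, j ≤ min (n + 1) ℓ → z j = y j) →
        (∀ j, n + 1 ≤ j → j < ℓ → z (j + 1) < z j) →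
        0 < z ℓ →
        0 < ⟪q • vec ℓ z - w (vec ℓ z), E ℓ 1⟫ ∧
        (∀ i, 1 ≤ i → i + 1 ≤ ℓ →
          0 < ⟪q • vec ℓ z - w (vec ℓ z), E ℓ i - E ℓ (i + 1)⟫) ∧
        (n + 1 ≤ ℓ →
          2 * z (n + 1) < ⟪q • vec ℓ z - w (vec ℓ z), E ℓ n - E ℓ (n + 1)⟫) :=
  stmt_7_general ℓ q hq m n hm hmn hn ε hε w hw1 hw2 hw3 x hx hxm hx3
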